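/- Let K be a coloured graph on n vertices, let c be a colour, let vw be an edge of K of colour c, and let D₁, D₂, D₃ be pairwise disjoint subsets of V(K)∖{v,w} such that K[{v},D₁], K[D₁,D₂], K[D₂,D₃] and K[D₃,{w}] are all (η,c)-complete (w.r.t. n). If |Dᵢ| > 2ηn + 2 for all i ∈ [3], then the subgraph of K induced on D₁ ∪ D₂ ∪ D₃ ∪ {v,w} contains a cycle of length 5 all of whose edges have colour c. -/

import Mathlib

open SimpleGraph

/-- Vertex set of the complete tripartite graph `K_{n,n,n}`. -/
abbrev TriV (n : ℕ) := (Σ _ : Fin 3, Fin n)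

/-- The complete tripartite graph `K_{n,n,n}`. -/
def triK (n : ℕ) : SimpleGraph (TriV n) := completeMultipartiteGraph (fun _ : Fin 3 => Fin n)

/-- The spanning subgraph of a coloured graph formed by the edges of colour `c`. -/
def colSub {V : Type} (G : SimpleGraph V) (col : Sym2 V → Bool) (c : Bool) : SimpleGraph V where
  Adj u v := G.Adj u v ∧ col s(u, v) = c
  symm := by
    refine ⟨fun u v h => ?_⟩
    refine ⟨h.1.symm, ?_⟩
    rw [Sym2.eq_swap]
    exact h.2
  loopless := ⟨fun v h => G.loopless.irrefl v h.1⟩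

/-- The class `𝒦ηₙ` of spanning subgraphs of `K_{n,n,n}` with minimum degree `> (2-η)n`. -/
def KK (n : ℕ) (η : ℝ) (K : SimpleGraph (TriV n)) : Prop :=
  K ≤ triK n ∧ ∀ v : TriV n, (2 - η) * n < (({u | K.Adj v u} : Set (TriV n)).ncard : ℝ)

/-- `M` is a matching in the graph `G`: a set of pairwise vertex-disjoint edges of `G`. -/
def IsMatching' {V : Type} (G : SimpleGraph V) (M : Finset (Sym2 V)) : Prop :=
  (∀ e ∈ M, e ∈ G.edgeSet) ∧
    ∀ e ∈ M, ∀ f ∈ M, e ≠ f → ∀ v : V, v ∈ e → v ∉ f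

/-- `v` is covered by the matching `M`. -/
def MCovers {V : Type} (M : Finset (Sym2 V)) (v : V) : Prop := ∃ e ∈ M, v ∈ e

/-- The matching `M` is connected in `G`: all covered vertices lie in one component of `G`. -/
def MatchConnected {V : Type} (G : SimpleGraph V) (M : Finset (Sym2 V)) : Prop :=
  ∀ u v : V, MCovers M u → MCovers M v → G.Reachable u v

/-- The matching `M` is odd: the component of `G` containing it has an odd cycle. -/
def MatchOdd {V : Type} (G : SimpleGraph V) (M : Finset (Sym2 V)) : Prop :=
  ∃ (u : V) (p : G.Walk u u), p.IsCycle ∧ Odd p.length ∧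
    ∃ v : V, MCovers M v ∧ G.Reachable u v

/-- A coloured graph is `m`-odd if some colour contains an odd connected matching of
size at least `m`. -/
def mOdd (n : ℕ) (K : SimpleGraph (TriV n)) (col : Sym2 (TriV n) → Bool) (m : ℝ) : Prop :=
  ∃ (c : Bool) (M : Finset (Sym2 (TriV n))),
    IsMatching' (colSub K col c) M ∧ MatchConnected (colSub K col c) M ∧
      MatchOdd (colSub K col c) M ∧ m ≤ (M.card : ℝ)

/-- A fork system of ratio at most `r` in `G`: each element is a fork given by its center
and its (nonempty) set of at most `r` prongs; the forks are pairwise vertex-disjoint. -/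
def IsForkSystem {V : Type} (G : SimpleGraph V) (r : ℕ) (F : Finset (V × Finset V)) : Prop :=
  (∀ p ∈ F, p.2.Nonempty ∧ p.1 ∉ p.2 ∧ p.2.card ≤ r ∧ ∀ v ∈ p.2, G.Adj p.1 v) ∧
    ∀ p ∈ F, ∀ q ∈ F, p ≠ q → ∀ v : V, (v = p.1 ∨ v ∈ p.2) → ¬(v = q.1 ∨ v ∈ q.2)

/-- `v` is covered by the fork system `F`. -/
def FCovers {V : Type} (F : Finset (V × Finset V)) (v : V) : Prop :=
  ∃ p ∈ F, v = p.1 ∨ v ∈ p.2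

/-- The fork system `F` is connected in `G`. -/
def ForkConnected {V : Type} (G : SimpleGraph V) (F : Finset (V × Finset V)) : Prop :=
  ∀ u v : V, FCovers F u → FCovers F v → G.Reachable u v

/-- The size of a fork system: the total number of prongs. -/
def forkSize {V : Type} (F : Finset (V × Finset V)) : ℕ := ∑ p ∈ F, p.2.card

/-- A coloured graph is `(m,f,r)`-good if some colour contains a connected matching of size
at least `m` and a connected fork system of ratio at most `r` and size at least `f`. -/
def Good (n : ℕ) (K : SimpleGraph (TriV n)) (col : Sym2 (TriV n) → Bool)
    (m f : ℝ) (r : ℕ) : Prop :=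
  ∃ c : Bool,
    (∃ M, IsMatching' (colSub K col c) M ∧ MatchConnected (colSub K col c) M ∧
      m ≤ (M.card : ℝ)) ∧
    (∃ F, IsForkSystem (colSub K col c) r F ∧ ForkConnected (colSub K col c) F ∧
      f ≤ (forkSize F : ℝ))

/-- `K[D,D']` is `η`-complete w.r.t. `n`: every vertex of either side has at most `ηn`
non-neighbours on the other side. -/
def EtaComplete {V : Type} (K : SimpleGraph V) (n : ℕ) (η : ℝ) (D D' : Finset V) : Prop :=
  (∀ v ∈ D, (({u | u ∈ D' ∧ ¬K.Adj v u} : Set V).ncard : ℝ) ≤ η * n) ∧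
  (∀ v ∈ D', (({u | u ∈ D ∧ ¬K.Adj u v} : Set V).ncard : ℝ) ≤ η * n)

/-- `K[D,D']` is `(η,c)`-complete: `η`-complete and all its edges have colour `c`. -/
def EtaCComplete {V : Type} (K : SimpleGraph V) (col : Sym2 V → Bool) (n : ℕ) (η : ℝ)
    (c : Bool) (D D' : Finset V) : Prop :=
  EtaComplete K n η D D' ∧ ∀ u ∈ D, ∀ v ∈ D', K.Adj u v → col s(u, v) = c

/-- Pyramid configuration with parameter `η` (Definition (E1)). -/
def PyramidConfig (n : ℕ) (K : SimpleGraph (TriV n)) (col : Sym2 (TriV n) → Bool)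
    (η : ℝ) : Prop :=
  ∃ (c c' : Bool) (D1 D2 D1' D2' : Finset (TriV n)),
    Disjoint D1 D2 ∧ Disjoint D1 D1' ∧ Disjoint D1 D2' ∧ Disjoint D2 D1' ∧
      Disjoint D2 D2' ∧ Disjoint D1' D2' ∧
    D1.card ≤ n ∧ D2.card ≤ n ∧ D1'.card ≤ n ∧ D2'.card ≤ n ∧
    (1 - η) * n ≤ (D1.card : ℝ) ∧ (1 - η) * n ≤ (D2.card : ℝ) ∧
    (1 - η) * n ≤ (D1'.card : ℝ) + (D2'.card : ℝ) ∧
    (D1' = ∅ ∨ 2 * η * n ≤ (D1'.card : ℝ)) ∧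
    (D2' = ∅ ∨ 2 * η * n ≤ (D2'.card : ℝ)) ∧
    EtaCComplete K col n η c D1 D1' ∧ EtaCComplete K col n η c D2 D2' ∧
    EtaComplete K n η D1 D2' ∧ EtaComplete K n η D2 D1' ∧ EtaComplete K n η D1 D2 ∧
    (EtaCComplete K col n η c' D1 D2 ∨
      (EtaCComplete K col n η c' D1 D2' ∧ EtaCComplete K col n η c' D1' D2))

/-- Crossing relation of the six bipartite graphs in the spider configuration. -/
def spiderCross {V : Type} (A1 A2 B1 B2 C1 C2 : Finset V) (u v : V) : Prop :=
  (u ∈ A1 ∧ (v ∈ B2 ∨ v ∈ C2)) ∨ (u ∈ B1 ∧ (v ∈ A2 ∨ v ∈ C2)) ∨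
    (u ∈ C1 ∧ (v ∈ A2 ∨ v ∈ B2))

/-- The union of the six bipartite graphs in the spider configuration, as a graph. -/
def spiderGraph {V : Type} (K : SimpleGraph V) (A1 A2 B1 B2 C1 C2 : Finset V) :
    SimpleGraph V where
  Adj u v := K.Adj u v ∧
    (spiderCross A1 A2 B1 B2 C1 C2 u v ∨ spiderCross A1 A2 B1 B2 C1 C2 v u)
  symm := by
    refine ⟨fun u v h => ?_⟩
    exact ⟨h.1.symm, h.2.symm⟩
  loopless := ⟨fun v h => K.loopless.irrefl v h.1⟩

/-- Spider configuration with parameter `η` (Definition (E2)). -/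
def SpiderConfig (n : ℕ) (K : SimpleGraph (TriV n)) (col : Sym2 (TriV n) → Bool)
    (η : ℝ) : Prop :=
  ∃ (c : Bool) (A1 A2 B1 B2 C1 C2 : Finset (TriV n)),
    List.Pairwise Disjoint [A1, A2, B1, B2, C1, C2] ∧
    (1 - η) * n ≤ ((A1 ∪ A2).card : ℝ) ∧ (1 - η) * n ≤ ((B1 ∪ B2).card : ℝ) ∧
      (1 - η) * n ≤ ((C1 ∪ C2).card : ℝ) ∧
    EtaCComplete K col n η c A1 B2 ∧ EtaCComplete K col n η c A1 C2 ∧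
    EtaCComplete K col n η c B1 A2 ∧ EtaCComplete K col n η c B1 C2 ∧
    EtaCComplete K col n η c C1 A2 ∧ EtaCComplete K col n η c C1 B2 ∧
    (∀ u ∈ A1 ∪ B1 ∪ C1 ∪ A2 ∪ B2 ∪ C2, ∀ v ∈ A1 ∪ B1 ∪ C1 ∪ A2 ∪ B2 ∪ C2,
      (spiderGraph K A1 A2 B1 B2 C1 C2).Reachable u v) ∧
    ∃ AB AC BA BC CA CB CC : Finset (TriV n),
      A2 = AB ∪ AC ∧ Disjoint AB AC ∧
      B2 = BA ∪ BC ∧ Disjoint BA BC ∧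
      C2 = CA ∪ CB ∪ CC ∧ Disjoint CA CB ∧ Disjoint CA CC ∧ Disjoint CB CC ∧
      (AB = ∅ ∨ 2 * η * n ≤ (AB.card : ℝ)) ∧ (AC = ∅ ∨ 2 * η * n ≤ (AC.card : ℝ)) ∧
      (BA = ∅ ∨ 2 * η * n ≤ (BA.card : ℝ)) ∧ (BC = ∅ ∨ 2 * η * n ≤ (BC.card : ℝ)) ∧
      (CA = ∅ ∨ 2 * η * n ≤ (CA.card : ℝ)) ∧ (CB = ∅ ∨ 2 * η * n ≤ (CB.card : ℝ)) ∧
      (CC = ∅ ∨ 2 * η * n ≤ (CC.card : ℝ)) ∧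
      B1.card ≤ A1.card ∧ (C1 ∪ CC).card ≤ B1.card ∧
      AB.card = BA.card ∧ (AB.card : ℝ) ≤ n - (C2.card : ℝ) ∧
      AC.card = CA.card ∧ (AC.card : ℝ) ≤ n - (B2.card : ℝ) ∧
      BC.card = CB.card ∧ (BC.card : ℝ) ≤ n - (A2.card : ℝ) ∧
      (CC = ∅ ∨ AB = ∅) ∧
      (A2 = ∅ ∨ ((A2 ∪ B2 ∪ CA ∪ CB).card : ℝ) ≤ (1 - η) * (3 / 2) * n) ∧
      (C1 = ∅ ∨ ((A1 ∪ B1 ∪ C1).card : ℝ) < (1 - η) * (3 / 2) * n ∨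
        ((B1 ∪ C1).card : ℝ) ≤ (1 - η) * (3 / 4) * n)

/-- A coloured graph is `η`-extremal if it is in pyramid or spider configuration. -/
def Extremal (n : ℕ) (K : SimpleGraph (TriV n)) (col : Sym2 (TriV n) → Bool)
    (η : ℝ) : Prop :=
  PyramidConfig n K col η ∨ SpiderConfig n K col η

/-- The density of the pair of vertex sets `(U,W)` in `G`. -/
noncomputable def density {V : Type} (G : SimpleGraph V) (U W : Finset V) : ℝ :=
  (({p : V × V | p.1 ∈ U ∧ p.2 ∈ W ∧ G.Adj p.1 p.2} : Set (V × V)).ncard : ℝ) /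
    ((U.card : ℝ) * (W.card : ℝ))

/-- `(U,W)` is an `(ε,d)`-regular pair in `G`. -/
def IsRegularPair {V : Type} (G : SimpleGraph V) (ε d : ℝ) (U W : Finset V) : Prop :=
  d ≤ density G U W ∧
    ∀ U' ⊆ U, ∀ W' ⊆ W, ε * U.card ≤ (U'.card : ℝ) → ε * W.card ≤ (W'.card : ℝ) →
      |density G U' W' - density G U W| ≤ ε

/-- `𝔾` is an `(ε,d)`-reduced graph of `G` with partition `V₀ ∪ V₁ ∪ ... ∪ V_k`
given by the bin set `V0` and the clusters `P i`. -/
def IsReducedGraph {V : Type} [Fintype V] (G : SimpleGraph V) (ε d : ℝ) (k : ℕ)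
    (GG : SimpleGraph (Fin k)) (V0 : Finset V) (P : Fin k → Finset V) : Prop :=
  (∀ i, Disjoint V0 (P i)) ∧ (∀ i j, i ≠ j → Disjoint (P i) (P j)) ∧
    (∀ v : V, v ∈ V0 ∨ ∃ i, v ∈ P i) ∧
    ((V0.card : ℝ) ≤ ε * Fintype.card V) ∧
    (∀ i j, (P i).card = (P j).card) ∧
    (∀ i j, GG.Adj i j → IsRegularPair G ε d (P i) (P j))

/-- The graph obtained from `G` by deleting the vertices in `C` (the deleted vertices
remain as isolated vertices). -/
def delVerts {V : Type} (G : SimpleGraph V) (C : Finset V) : SimpleGraph V where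
  Adj u v := G.Adj u v ∧ u ∉ C ∧ v ∉ C
  symm := by
    refine ⟨fun u v h => ?_⟩
    exact ⟨h.1.symm, h.2.2, h.2.1⟩
  loopless := ⟨fun v h => G.loopless.irrefl v h.1⟩

/-- `C` is an `S`-cut of `T`: every component of `T - C` has at most `S` vertices. -/
def IsCut {V : Type} (T : SimpleGraph V) (S : ℝ) (C : Finset V) : Prop :=
  ∀ v : V, v ∉ C →
    ((({u | (delVerts T C).Reachable u v} : Set V).ncard : ℝ)) ≤ S

/-- `h` is a `(ρ,L)`-valid assignment of `T` to `GG`. -/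
def ValidAssignment {V W : Type} (T : SimpleGraph V) (GG : SimpleGraph W)
    (ρ L : ℝ) (h : V → W) : Prop :=
  (∀ u v : V, T.Adj u v → GG.Adj (h u) (h v)) ∧
  (∀ x : V, ({i | ∃ y : V, T.Adj x y ∧ h y = i} : Set W).ncard ≤ 2) ∧
  (∀ i : W, (({x : V | h x = i} : Set V).ncard : ℝ) < (1 - ρ) * L)

/-- The bipartite graph `K[D,D']` formed by the edges of `K` between `D` and `D'`. -/
def bipBetween {V : Type} (K : SimpleGraph V) (D D' : Finset V) : SimpleGraph V where
  Adj u v := K.Adj u v ∧ ((u ∈ D ∧ v ∈ D') ∨ (u ∈ D' ∧ v ∈ D))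
  symm := by
    refine ⟨fun u v h => ?_⟩
    refine ⟨h.1.symm, ?_⟩
    rcases h.2 with ⟨hu, hv⟩ | ⟨hu, hv⟩
    · exact Or.inr ⟨hv, hu⟩
    · exact Or.inl ⟨hv, hu⟩
  loopless := ⟨fun v h => K.loopless.irrefl v h.1⟩

/-
Choose greedily x₁ ∈ D₁ adjacent to v, x₂ ∈ D₂ adjacent to x₁, and x₃ ∈ D₃ adjacent to both x₂
and w; the last exists because x₂ and w together have at most 2ηn < |D₃| non-neighbours in D₃.
All these edges have colour c, and by disjointness w v x₁ x₂ x₃ w is a 5-cycle.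
-/

theorem SimpleGraph.Walk.IsPath.cons_isCycle_of_two_le_length {V : Type*} {G : SimpleGraph V}
    {u v : V} {p : G.Walk v u} (hp : p.IsPath) (h : G.Adj u v) (hlen : 2 ≤ p.length) :
    (cons h p).IsCycle :=
  Walk.isCycle_iff_isPath_tail_and_le_length.mpr ⟨by simpa using hp, by simp; omega⟩

namespace Finset

variable {V : Type*}

theorem exists_mem_not_of_ncard_lt {D : Finset V} {P : V → Prop}
    (h : {u | u ∈ D ∧ P u}.ncard < D.card) : ∃ u ∈ D, ¬P u := by
  by_contra! hP
  have hsub : (D : Set V) ⊆ {u | u ∈ D ∧ P u} := fun u hu => ⟨hu, hP u hu⟩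
  have := Set.ncard_le_ncard hsub (D.finite_toSet.subset fun _ hu => hu.1)
  rw [Set.ncard_coe_finset] at this
  omega

theorem exists_mem_not_and_not_of_ncard_add_lt {D : Finset V} {P Q : V → Prop}
    (h : {u | u ∈ D ∧ P u}.ncard + {u | u ∈ D ∧ Q u}.ncard < D.card) :
    ∃ u ∈ D, ¬P u ∧ ¬Q u := by
  by_contra! hPQ
  have hsub : (D : Set V) ⊆ {u | u ∈ D ∧ P u} ∪ {u | u ∈ D ∧ Q u} := fun u hu => by
    by_cases hu' : P u
    · exact Or.inl ⟨hu, hu'⟩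
    · exact Or.inr ⟨hu, hPQ u hu hu'⟩
  have := (Set.ncard_le_ncard hsub ((D.finite_toSet.subset fun _ hu => hu.1).union
    (D.finite_toSet.subset fun _ hu => hu.1))).trans (Set.ncard_union_le _ _)
  rw [Set.ncard_coe_finset] at this
  omega

end Finset

section EtaComplete

variable {V : Type} {K : SimpleGraph V} {n : ℕ} {η : ℝ} {D D' D'' : Finset V} {x z : V}

theorem EtaComplete.exists_adj (h : EtaComplete K n η D D') (hx : x ∈ D)
    (hcard : η * n < D'.card) : ∃ y ∈ D', K.Adj x y := by
  simpa using Finset.exists_mem_not_of_ncard_lt (P := fun u => ¬K.Adj x u) <| by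
    exact_mod_cast (h.1 x hx).trans_lt hcard

theorem EtaComplete.exists_adj_adj (h : EtaComplete K n η D D') (h' : EtaComplete K n η D' D'')
    (hx : x ∈ D) (hz : z ∈ D'') (hcard : 2 * η * n < D'.card) :
    ∃ y ∈ D', K.Adj x y ∧ K.Adj y z := by
  simpa using Finset.exists_mem_not_and_not_of_ncard_add_lt
    (P := fun u => ¬K.Adj x u) (Q := fun u => ¬K.Adj u z) <| by
      exact_mod_cast (show ({u | u ∈ D' ∧ ¬K.Adj x u}.ncard : ℝ) +
        {u | u ∈ D' ∧ ¬K.Adj u z}.ncard < D'.card by linarith [h.1 x hx, h'.2 z hz])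

variable {col : Sym2 V → Bool} {c : Bool}

theorem EtaCComplete.colSub_adj (h : EtaCComplete K col n η c D D') {u v : V} (hu : u ∈ D)
    (hv : v ∈ D') (huv : K.Adj u v) : (colSub K col c).Adj u v :=
  ⟨huv, h.2 u hu v hv huv⟩

theorem EtaCComplete.exists_colSub_adj (h : EtaCComplete K col n η c D D') (hx : x ∈ D)
    (hcard : η * n < D'.card) : ∃ y ∈ D', (colSub K col c).Adj x y := by
  obtain ⟨y, hy, hxy⟩ := h.1.exists_adj hx hcard
  exact ⟨y, hy, h.colSub_adj hx hy hxy⟩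

theorem EtaCComplete.exists_colSub_adj_adj (h : EtaCComplete K col n η c D D')
    (h' : EtaCComplete K col n η c D' D'') (hx : x ∈ D) (hz : z ∈ D'')
    (hcard : 2 * η * n < D'.card) :
    ∃ y ∈ D', (colSub K col c).Adj x y ∧ (colSub K col c).Adj y z := by
  obtain ⟨y, hy, hxy, hyz⟩ := h.1.exists_adj_adj h'.1 hx hz hcard
  exact ⟨y, hy, h.colSub_adj hx hy hxy, h'.colSub_adj hy hz hyz⟩

end EtaComplete

/-- Proposition 6.4. A `c`-coloured edge `vw` together with a chain of
`(η,c)`-complete bipartite graphs through `D₁, D₂, D₃` yields a `c`-coloured cycle of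
length 5 inside `D₁ ∪ D₂ ∪ D₃ ∪ {v,w}`. -/
theorem stmt17 {V : Type} [Fintype V] [DecidableEq V] (K : SimpleGraph V)
    (col : Sym2 V → Bool) (η : ℝ) (c : Bool) (v w : V)
    (hvw : K.Adj v w) (hcol : col s(v, w) = c)
    (D₁ D₂ D₃ : Finset V)
    (hd12 : Disjoint D₁ D₂) (hd13 : Disjoint D₁ D₃) (hd23 : Disjoint D₂ D₃)
    (hv1 : v ∉ D₁) (hv2 : v ∉ D₂) (hv3 : v ∉ D₃)
    (hw1 : w ∉ D₁) (hw2 : w ∉ D₂) (hw3 : w ∉ D₃)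
    (h1 : EtaCComplete K col (Fintype.card V) η c {v} D₁)
    (h2 : EtaCComplete K col (Fintype.card V) η c D₁ D₂)
    (h3 : EtaCComplete K col (Fintype.card V) η c D₂ D₃)
    (h4 : EtaCComplete K col (Fintype.card V) η c D₃ {w})
    (hs1 : 2 * η * (Fintype.card V : ℝ) + 2 < (D₁.card : ℝ))
    (hs2 : 2 * η * (Fintype.card V : ℝ) + 2 < (D₂.card : ℝ))
    (hs3 : 2 * η * (Fintype.card V : ℝ) + 2 < (D₃.card : ℝ)) :
    ∃ (u : V) (p : (colSub K col c).Walk u u), p.IsCycle ∧ p.length = 5 ∧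
      ∀ z ∈ p.support, z ∈ D₁ ∪ D₂ ∪ D₃ ∪ {v, w} := by
  obtain ⟨x₁, hx₁, hvx₁⟩ := h1.exists_colSub_adj (Finset.mem_singleton_self v)
    (by linarith [(Nat.cast_nonneg D₁.card : (0 : ℝ) ≤ _)])
  obtain ⟨x₂, hx₂, hx₁x₂⟩ := h2.exists_colSub_adj hx₁
    (by linarith [(Nat.cast_nonneg D₂.card : (0 : ℝ) ≤ _)])
  obtain ⟨x₃, hx₃, hx₂x₃, hx₃w⟩ := h3.exists_colSub_adj_adj h4 hx₂ (Finset.mem_singleton_self w)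
    (by linarith)
  have hwv : (colSub K col c).Adj w v := ⟨hvw.symm, by rwa [Sym2.eq_swap]⟩
  let p : (colSub K col c).Walk v w := .cons hvx₁ (.cons hx₁x₂ (.cons hx₂x₃ (.cons hx₃w .nil)))
  have hp : p.IsPath := by
    apply Walk.IsPath.mk'
    have := hvw.ne
    have := Finset.disjoint_left.mp hd12 hx₁
    have := Finset.disjoint_left.mp hd13 hx₁
    have := Finset.disjoint_left.mp hd23 hx₂
    simp only [p, Walk.support_cons, Walk.support_nil, List.nodup_cons, List.mem_cons,
      List.not_mem_nil, List.nodup_nil]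
    grind
  refine ⟨w, .cons hwv p, hp.cons_isCycle_of_two_le_length hwv (by simp [p]), by simp [p], ?_⟩
  simp only [p, Walk.support_cons, Walk.support_nil, List.mem_cons, List.not_mem_nil]
  grind
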